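/- Let p be a probability density on R^n, σ > 0, and let p_σ(x_σ) = ∫ G_σ(x_σ - x) p(x) dx be the convolution of p with the Gaussian density G_σ of covariance σ²I. Then the posterior mean satisfies Tweedie's formula: E[x | x_σ] = x_σ + σ² ∇ log p_σ(x_σ). -/

import Mathlib

/-! The score of `p_σ` is obtained by differentiating the Gaussian kernel under the integral:
`∇ p_σ(y) = σ⁻² ∫ G_σ(y - x) p(x) (x - y) dx = σ⁻² (p_σ(y) E[x | x_σ = y] - p_σ(y) y)`.
Dividing by `p_σ(y)` turns the left side into `∇ log p_σ(y)`, which rearranges to Tweedie's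
formula. -/

open MeasureTheory Real

/-- The Gaussian density `G_σ` on `ℝⁿ` with covariance `σ² I`. -/
noncomputable def gaussDens (n : ℕ) (σ : ℝ) (v : EuclideanSpace ℝ (Fin n)) : ℝ :=
  (2 * Real.pi * σ ^ 2) ^ (-(n : ℝ) / 2) * Real.exp (-‖v‖ ^ 2 / (2 * σ ^ 2))

theorem HasGradientAt.log {F : Type*} [NormedAddCommGroup F] [InnerProductSpace ℝ F]
    [CompleteSpace F] {g : F → ℝ} {g' y : F} (hg : HasGradientAt g g' y) (hy : g y ≠ 0) :
    HasGradientAt (fun u => Real.log (g u)) ((g y)⁻¹ • g') y := by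
  rw [hasGradientAt_iff_hasFDerivAt, map_smul]
  exact (Real.hasDerivAt_log hy).comp_hasFDerivAt y hg.hasFDerivAt

theorem integral_smul_smul_sub {α E : Type*} [MeasurableSpace α] {μ : Measure α}
    [NormedAddCommGroup E] [NormedSpace ℝ E] [CompleteSpace E] {f : α → ℝ} {g : α → E}
    (hf : Integrable f μ) (hfg : Integrable (fun x => f x • g x) μ) (c : ℝ) (y : E) :
    ∫ x, f x • (c • (g x - y)) ∂μ = c • (∫ x, f x • g x ∂μ - (∫ x, f x ∂μ) • y) := by
  simp_rw [smul_comm (f _) c, integral_smul, smul_sub]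
  rw [integral_sub hfg (hf.smul_const y), integral_smul_const, smul_sub]

theorem inv_smul_eq_add_smul_gradient_log {F : Type*} [NormedAddCommGroup F]
    [InnerProductSpace ℝ F] [CompleteSpace F] {Z : F → ℝ} {s : ℝ} {m y : F}
    (hZ : HasGradientAt Z (s⁻¹ • (m - Z y • y)) y) (hZy : Z y ≠ 0) (hs : s ≠ 0) :
    (Z y)⁻¹ • m = y + s • gradient (fun u => Real.log (Z u)) y := by
  rw [(hZ.log hZy).gradient, smul_comm, smul_inv_smul₀ hs, smul_sub, smul_smul,
    inv_mul_cancel₀ hZy, one_smul, add_sub_cancel]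

theorem tweedie_formula_general (n : ℕ) (σ : ℝ) (hσ : 0 < σ)
    (p : EuclideanSpace ℝ (Fin n) → ℝ)
    (pσ : EuclideanSpace ℝ (Fin n) → ℝ)
    (hpσ : ∀ y, pσ y = ∫ x, gaussDens n σ (y - x) * p x)
    (hInt : ∀ y, Integrable (fun x => (gaussDens n σ (y - x) * p x) • x))
    (hgrad : ∀ y, HasGradientAt pσ
      (∫ x, (gaussDens n σ (y - x) * p x) • ((σ ^ 2)⁻¹ • (x - y))) y)
    (M : EuclideanSpace ℝ (Fin n) → EuclideanSpace ℝ (Fin n))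
    (hM : ∀ y, M y = (pσ y)⁻¹ • ∫ x, (gaussDens n σ (y - x) * p x) • x) :
    ∀ y, 0 < pσ y →
      M y = y + σ ^ 2 • gradient (fun u => Real.log (pσ u)) y := by
  intro y hpos
  -- a non-integrable kernel would have Bochner integral `0`, contradicting `0 < pσ y`
  have hkernel : Integrable (fun x => gaussDens n σ (y - x) * p x) :=
    Integrable.of_integral_ne_zero (hpσ y ▸ hpos.ne')
  have hscore := hgrad y
  rw [integral_smul_smul_sub hkernel (hInt y), ← hpσ y] at hscore
  rw [hM y]
  exact inv_smul_eq_add_smul_gradient_log hscore hpos.ne' (pow_ne_zero 2 hσ.ne')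

/-- **Tweedie's formula.** If `p` is a probability density on `ℝⁿ`, `σ > 0`,
`p_σ = G_σ * p` is the Gaussian smoothing of `p`, and `M y = E[x | x_σ = y]` is the
posterior mean (written as a ratio of integrals), then wherever `p_σ > 0`,
`E[x | x_σ] = x_σ + σ² ∇ log p_σ(x_σ)`.  Differentiation under the integral sign
is assumed valid via the hypothesis `hgrad`. -/
theorem tweedie_formula (n : ℕ) (σ : ℝ) (hσ : 0 < σ)
    (p : EuclideanSpace ℝ (Fin n) → ℝ)
    (hp0 : ∀ x, 0 ≤ p x)
    (hp1 : ∫ x, p x = 1)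
    (pσ : EuclideanSpace ℝ (Fin n) → ℝ)
    (hpσ : ∀ y, pσ y = ∫ x, gaussDens n σ (y - x) * p x)
    (hInt : ∀ y, Integrable (fun x => (gaussDens n σ (y - x) * p x) • x))
    (hgrad : ∀ y, HasGradientAt pσ
      (∫ x, (gaussDens n σ (y - x) * p x) • ((σ ^ 2)⁻¹ • (x - y))) y)
    (M : EuclideanSpace ℝ (Fin n) → EuclideanSpace ℝ (Fin n))
    (hM : ∀ y, M y = (pσ y)⁻¹ • ∫ x, (gaussDens n σ (y - x) * p x) • x) :
    ∀ y, 0 < pσ y →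
      M y = y + σ ^ 2 • gradient (fun u => Real.log (pσ u)) y :=
  tweedie_formula_general n σ hσ p pσ hpσ hInt hgrad M hM
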